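/- Let (X,d) be a metric space, (γ_n) a sequence of positive reals, θ : ℕ → ℕ a rate of divergence for ∑_{n=0}^∞ γ_n² = ∞, and φ : [0,∞) → [0,∞) nondecreasing with φ(t) = 0 iff t = 0. Let (T_n) be a family of self-maps of X, b ∈ ℕ with b ≥ 1, p a common fixed point of all T_n, and C the closed ball of center p and radius b. Assume that for every n, T_n is uniformly (P₂) on C with modulus γ_n·φ. Let x ∈ C, let (x_n) be the proximal-point iteration starting at x, and assume condition (C2) holds for (x_n). Then p is the only common fixed point of the family (T_n) lying in C, and (x_n) converges to p with rate of convergence Ψ given by Ψ(k) := θ(b²·(⌈2b/φ(1/(k+1))⌉ + 1)²) + 1. -/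

import Mathlib

/-!
Testing the (P₂) inequality against the fixed point `p` gives the Fejér-type estimate
`d(x_{n+1}, p)² + d(x_n, x_{n+1})² + 2 γ_n φ(d(x_{n+1}, p)) ≤ d(x_n, p)²`.
Telescoping bounds `∑ d(x_n, x_{n+1})²` by `b²`; since `c_n := d(x_n, x_{n+1}) / γ_n` is
nonincreasing, `c_N² ∑_{n ≤ N} γ_n² ≤ b²`, so the rate of divergence makes `c_N` small at
`N = θ K`. Combined with the triangle inequality, the Fejér estimate at that `N` yields
`φ(d(x_{N+1}, p)) ≤ b c_N < φ(1/(k+1))`, hence `d(x_{N+1}, p) ≤ 1/(k+1)`, and the distances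
to `p` never increase afterwards.
-/

open Filter

/-- `T` is uniformly (P₂) on `C` with modulus `φ`. -/
def UniformlyP2 {X : Type*} [MetricSpace X] (T : X → X) (C : Set X) (φ : ℝ → ℝ) : Prop :=
  Set.MapsTo T C C ∧
  ∀ x ∈ C, ∀ y ∈ C, 2 * dist (T x) (T y) ^ 2 ≤
    dist x (T y) ^ 2 + dist y (T x) ^ 2 - dist x (T x) ^ 2 - dist y (T y) ^ 2
      - 2 * φ (dist (T x) (T y))

open Finset

theorem sum_range_le_of_add_le {a e : ℕ → ℝ} (ha : ∀ n, 0 ≤ a n)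
    (h : ∀ n, a (n + 1) + e n ≤ a n) (N : ℕ) : ∑ n ∈ range N, e n ≤ a 0 :=
  calc ∑ n ∈ range N, e n ≤ ∑ n ∈ range N, (a n - a (n + 1)) :=
        sum_le_sum fun n _ => by linarith [h n]
    _ = a 0 - a N := sum_range_sub' a N
    _ ≤ a 0 := by linarith [ha N]

theorem Antitone.sq_mul_sum_sq_le {c γ : ℕ → ℝ} (hc : Antitone c) (hc0 : ∀ n, 0 ≤ c n)
    (N : ℕ) : c N ^ 2 * ∑ n ∈ range (N + 1), γ n ^ 2 ≤ ∑ n ∈ range (N + 1), (c n * γ n) ^ 2 := by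
  rw [mul_sum]
  refine sum_le_sum fun n hn => ?_
  have hcn : c N ≤ c n := hc (Nat.lt_succ_iff.mp (mem_range.mp hn))
  have := hc0 N
  rw [mul_pow]
  gcongr

theorem two_mul_mul_le_of_sq_mul_le {b c r : ℝ} (hb : 0 < b) (hc : 0 ≤ c) (hr : 0 < r)
    (h : c ^ 2 * (b ^ 2 * ((⌈2 * b / r⌉₊ : ℝ) + 1) ^ 2) ≤ b ^ 2) : 2 * c * b ≤ r := by
  set m : ℝ := ⌈2 * b / r⌉₊ + 1
  have hm : 2 * b < m * r := by
    have := Nat.le_ceil (2 * b / r)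
    rw [div_le_iff₀ hr] at this
    linarith
  have hcm : c * m ≤ 1 := by
    have : (c * m) ^ 2 ≤ 1 ^ 2 := by nlinarith [mul_pos hb hb]
    exact (pow_le_pow_iff_left₀ (by positivity) zero_le_one two_ne_zero).1 this
  nlinarith

namespace UniformlyP2

variable {X : Type*} [MetricSpace X] {T : X → X} {C : Set X} {ψ : ℝ → ℝ} {p x : X}

theorem dist_sq_add_le (hT : UniformlyP2 T C ψ) (hpC : p ∈ C) (hp : T p = p) (hx : x ∈ C) :
    dist (T x) p ^ 2 + dist x (T x) ^ 2 + 2 * ψ (dist (T x) p) ≤ dist x p ^ 2 := by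
  have h := hT.2 x hx p hpC
  rw [hp, dist_self, dist_comm p] at h
  linarith

theorem eq_of_isFixedPt (hT : UniformlyP2 T C ψ) (hψ : ∀ t, 0 < t → 0 < ψ t) (hpC : p ∈ C)
    (hp : T p = p) (hx : x ∈ C) (hxT : T x = x) : x = p := by
  have h := hT.dist_sq_add_le hpC hp hx
  rw [hxT, dist_self] at h
  by_contra hne
  linarith [hψ _ (dist_pos.mpr hne)]

theorem modulus_le_mul_dist (hT : UniformlyP2 T C ψ) (hpC : p ∈ C) (hp : T p = p)
    (hx : x ∈ C) : ψ (dist (T x) p) ≤ dist x (T x) * dist (T x) p := by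
  have h := hT.dist_sq_add_le hpC hp hx
  have htri : dist x p ^ 2 ≤ (dist x (T x) + dist (T x) p) ^ 2 := by
    gcongr
    exact dist_triangle _ _ _
  nlinarith

theorem dist_sq_add_dist_sq_le (hT : UniformlyP2 T C ψ) (hψ : ∀ t, 0 ≤ t → 0 ≤ ψ t)
    (hpC : p ∈ C) (hp : T p = p) (hx : x ∈ C) :
    dist (T x) p ^ 2 + dist x (T x) ^ 2 ≤ dist x p ^ 2 := by
  linarith [hT.dist_sq_add_le hpC hp hx, hψ _ (dist_nonneg (x := T x) (y := p))]

theorem modulus_le_div_mul {φ : ℝ → ℝ} {γ r : ℝ} (hT : UniformlyP2 T C fun t => γ * φ t)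
    (hγ : 0 < γ) (hpC : p ∈ C) (hp : T p = p) (hx : x ∈ C) (hr : dist (T x) p ≤ r) :
    φ (dist (T x) p) ≤ dist x (T x) / γ * r := by
  rw [div_mul_eq_mul_div, le_div_iff₀ hγ, mul_comm]
  exact (hT.modulus_le_mul_dist hpC hp hx).trans (mul_le_mul_of_nonneg_left hr dist_nonneg)

end UniformlyP2

theorem iteration_mem {α : Type*} {T : ℕ → α → α} {C : Set α} {x : ℕ → α}
    (hT : ∀ n, Set.MapsTo (T n) C C) (hx0 : x 0 ∈ C) (hx : ∀ n, x (n + 1) = T n (x n)) (n : ℕ) :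
    x n ∈ C := by
  induction n with
  | zero => exact hx0
  | succ n ih => exact hx n ▸ hT n ih

section Iteration

variable {X : Type*} [MetricSpace X] {x : ℕ → X} {p : X}

theorem antitone_dist_of_sq_add_le
    (hstep : ∀ n, dist (x (n + 1)) p ^ 2 + dist (x n) (x (n + 1)) ^ 2 ≤ dist (x n) p ^ 2) :
    Antitone fun n => dist (x n) p :=
  antitone_nat_of_succ_le fun n =>
    (pow_le_pow_iff_left₀ dist_nonneg dist_nonneg two_ne_zero).1 <| by
      linarith [hstep n, sq_nonneg (dist (x n) (x (n + 1)))]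

theorem sum_sq_dist_succ_le
    (hstep : ∀ n, dist (x (n + 1)) p ^ 2 + dist (x n) (x (n + 1)) ^ 2 ≤ dist (x n) p ^ 2)
    (N : ℕ) : ∑ n ∈ range N, dist (x n) (x (n + 1)) ^ 2 ≤ dist (x 0) p ^ 2 :=
  sum_range_le_of_add_le (a := fun n => dist (x n) p ^ 2) (fun _ => sq_nonneg _) hstep N

theorem sq_dist_succ_div_mul_le {γ : ℕ → ℝ} (hγ : ∀ n, 0 < γ n)
    (hstep : ∀ n, dist (x (n + 1)) p ^ 2 + dist (x n) (x (n + 1)) ^ 2 ≤ dist (x n) p ^ 2)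
    (hc : Antitone fun n => dist (x n) (x (n + 1)) / γ n) {N : ℕ} {K : ℝ}
    (hK : K ≤ ∑ n ∈ range (N + 1), γ n ^ 2) :
    (dist (x N) (x (N + 1)) / γ N) ^ 2 * K ≤ dist (x 0) p ^ 2 :=
  calc (dist (x N) (x (N + 1)) / γ N) ^ 2 * K
      ≤ (dist (x N) (x (N + 1)) / γ N) ^ 2 * ∑ n ∈ range (N + 1), γ n ^ 2 := by gcongr
    _ ≤ ∑ n ∈ range (N + 1), (dist (x n) (x (n + 1)) / γ n * γ n) ^ 2 :=
      hc.sq_mul_sum_sq_le (fun n => div_nonneg dist_nonneg (hγ n).le) N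
    _ = ∑ n ∈ range (N + 1), dist (x n) (x (n + 1)) ^ 2 := by
      simp only [div_mul_cancel₀ _ (hγ _).ne']
    _ ≤ dist (x 0) p ^ 2 := sum_sq_dist_succ_le hstep _

end Iteration

theorem stmt2
    {X : Type*} [MetricSpace X]
    (γ : ℕ → ℝ) (hγ : ∀ n, 0 < γ n)
    (θ : ℕ → ℕ) (hθ : ∀ K : ℕ, (K : ℝ) ≤ ∑ n ∈ Finset.range (θ K + 1), γ n ^ 2)
    (φ : ℝ → ℝ) (hφmono : ∀ s t : ℝ, 0 ≤ s → s ≤ t → φ s ≤ φ t)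
    (hφnonneg : ∀ t : ℝ, 0 ≤ t → 0 ≤ φ t)
    (hφzero : ∀ t : ℝ, 0 ≤ t → (φ t = 0 ↔ t = 0))
    (T : ℕ → X → X) (b : ℕ) (hb : 1 ≤ b) (p : X) (hp : ∀ n, T n p = p)
    (C : Set X) (hC : C = Metric.closedBall p b)
    (hUP2 : ∀ n, UniformlyP2 (T n) C (fun t => γ n * φ t))
    (x₀ : X) (hx₀C : x₀ ∈ C)
    (x : ℕ → X) (hx0 : x 0 = x₀) (hx : ∀ n, x (n + 1) = T n (x n))
    (hC2 : ∀ n : ℕ,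
      dist (x (n + 1)) (x (n + 2)) / γ (n + 1) ≤ dist (x n) (x (n + 1)) / γ n) :
    (∀ q ∈ C, (∀ n, T n q = q) → q = p) ∧
    (∀ k : ℕ, ∀ n : ℕ,
      θ (b ^ 2 * (⌈(2 * (b : ℝ)) / φ (1 / ((k : ℝ) + 1))⌉₊ + 1) ^ 2) + 1 ≤ n →
      dist (x n) p ≤ 1 / ((k : ℝ) + 1)) := by
  have hb0 : (0 : ℝ) < b := by exact_mod_cast hb
  have hpC : p ∈ C := hC ▸ Metric.mem_closedBall_self hb0.le
  have hφpos : ∀ t, 0 < t → 0 < φ t := fun t ht =>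
    (hφnonneg t ht.le).lt_of_ne' fun h => ht.ne' ((hφzero t ht.le).1 h)
  refine ⟨fun q hqC hq => (hUP2 0).eq_of_isFixedPt (fun t ht => mul_pos (hγ 0) (hφpos t ht))
    hpC (hp 0) hqC (hq 0), ?_⟩
  have hxC : ∀ n, x n ∈ C := iteration_mem (fun n => (hUP2 n).1) (hx0 ▸ hx₀C) hx
  have hxb : ∀ n, dist (x n) p ≤ b := fun n => by simpa [hC] using hxC n
  have hstep : ∀ n, dist (x (n + 1)) p ^ 2 + dist (x n) (x (n + 1)) ^ 2 ≤ dist (x n) p ^ 2 :=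
    fun n => hx n ▸ (hUP2 n).dist_sq_add_dist_sq_le
      (fun t ht => mul_nonneg (hγ n).le (hφnonneg t ht)) hpC (hp n) (hxC n)
  intro k n hn
  set ε : ℝ := 1 / ((k : ℝ) + 1)
  have hε : 0 < ε := by positivity
  set N := θ (b ^ 2 * (⌈2 * (b : ℝ) / φ ε⌉₊ + 1) ^ 2)
  have hcN : 2 * (dist (x N) (x (N + 1)) / γ N) * b ≤ φ ε := by
    refine two_mul_mul_le_of_sq_mul_le hb0 (div_nonneg dist_nonneg (hγ N).le) (hφpos ε hε) ?_
    calc _ = (dist (x N) (x (N + 1)) / γ N) ^ 2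
          * ((b ^ 2 * (⌈2 * (b : ℝ) / φ ε⌉₊ + 1) ^ 2 : ℕ) : ℝ) := by push_cast; rfl
      _ ≤ dist (x 0) p ^ 2 := sq_dist_succ_div_mul_le hγ hstep (antitone_nat_of_succ_le hC2) (hθ _)
      _ ≤ b ^ 2 := by gcongr; exact hxb 0
  have hφN : φ (dist (x (N + 1)) p) ≤ dist (x N) (x (N + 1)) / γ N * b := by
    simpa only [hx] using
      (hUP2 N).modulus_le_div_mul (hγ N) hpC (hp N) (hxC N) (hx N ▸ hxb (N + 1))
  have hN : dist (x (N + 1)) p ≤ ε := by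
    by_contra! h
    linarith [hφmono _ _ hε.le h.le, hφpos ε hε]
  exact (antitone_dist_of_sq_add_le hstep hn).trans hN
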